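/- For abstract feature structures A and B: every TFS in Conc(A) is an alphabetic variant of every TFS in Conc(B) if and only if A = B. -/

import Mathlib

def deltaStar {F N : Type*} (d : N → F → Option N) : N → List F → Option N
  | q, [] => some q
  | q, f :: rest => (d q f).bind fun q' => deltaStar d q' rest

/-- A typed feature structure: a finite rooted graph with feature-labelled arcs,
all of whose nodes are reachable from the root. -/
structure TFS (F N : Type*) where
  Q : Finset N
  root : N
  root_mem : root ∈ Q
  delta : N → F → Option N
  delta_dom : ∀ q f q', delta q f = some q' → q ∈ Q ∧ q' ∈ Q
  reach : ∀ q ∈ Q, ∃ π : List F, deltaStar delta root π = some q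

/-- The value `δ(q̄, π)` of a path from the root. -/
def TFS.val {F N : Type*} (A : TFS F N) (π : List F) : Option N :=
  deltaStar A.delta A.root π

/-- `Π(A)`, the set of paths of `A`. -/
def TFS.paths {F N : Type*} (A : TFS F N) : Set (List F) :=
  {π | (A.val π).isSome}

/-- A TFS is cyclic if some node returns to itself via a nonempty path. -/
def TFS.Cyclic {F N : Type*} (A : TFS F N) : Prop :=
  ∃ q ∈ A.Q, ∃ α : List F, α ≠ [] ∧ deltaStar A.delta q α = some q

/-- Subsumption of TFSs via a subsumption morphism. -/
def Subsumes {F N T : Type*} [PartialOrder T] (θ : N → T) (A B : TFS F N) : Prop :=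
  ∃ h : N → N,
    (∀ q ∈ A.Q, h q ∈ B.Q) ∧
    h A.root = B.root ∧
    (∀ q ∈ A.Q, θ q ≤ θ (h q)) ∧
    (∀ q f q', A.delta q f = some q' → B.delta (h q) f = some (h q'))

/-- Bounded completeness: every up-bounded subset has a least upper bound. -/
def BddComplete (T : Type*) [PartialOrder T] : Prop :=
  ∀ S : Set T, (∃ u, ∀ t ∈ S, t ≤ u) → ∃ l, IsLUB S l

/-- A pre-abstract feature structure: a partial assignment of types to paths
(whose domain is the path set `Π`) together with a reentrancy relation. -/
structure PreAFS (F T : Type*) where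
  theta : List F → Option T
  rel : List F → List F → Prop

/-- The path set `Π` of a pre-AFS. -/
def PreAFS.dom {F T : Type*} (A : PreAFS F T) : Set (List F) :=
  {π | (A.theta π).isSome}

/-- The pre-AFS conditions: `Π` is nonempty and `≈ ⊆ Π × Π`. -/
def IsPreAFS {F T : Type*} (A : PreAFS F T) : Prop :=
  A.dom.Nonempty ∧ ∀ π₁ π₂, A.rel π₁ π₂ → π₁ ∈ A.dom ∧ π₂ ∈ A.dom

/-- `Π` is prefix-closed. -/
def PrefixClosed {F T : Type*} (A : PreAFS F T) : Prop :=
  ∀ π α : List F, π ++ α ∈ A.dom → π ∈ A.dom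

/-- Fusion-closedness. -/
def FusionClosed {F T : Type*} (A : PreAFS F T) : Prop :=
  ∀ π π' α α' : List F, π ++ α ∈ A.dom → π' ++ α' ∈ A.dom → A.rel π π' →
    π ++ α' ∈ A.dom ∧ π' ++ α ∈ A.dom ∧
    A.rel (π ++ α') (π' ++ α') ∧ A.rel (π' ++ α) (π ++ α)

/-- `≈` is an equivalence relation on `Π`. -/
def EquivOnDom {F T : Type*} (A : PreAFS F T) : Prop :=
  (∀ π ∈ A.dom, A.rel π π) ∧
  (∀ π₁ π₂, A.rel π₁ π₂ → A.rel π₂ π₁) ∧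
  (∀ π₁ π₂ π₃, A.rel π₁ π₂ → A.rel π₂ π₃ → A.rel π₁ π₃)

/-- `≈` has finitely many equivalence classes. -/
def FiniteIndex {F T : Type*} (A : PreAFS F T) : Prop :=
  {C : Set (List F) | ∃ π ∈ A.dom, C = {π' | A.rel π π'}}.Finite

/-- `Θ` respects the equivalence `≈`. -/
def RespectsRel {F T : Type*} (A : PreAFS F T) : Prop :=
  ∀ π₁ π₂, A.rel π₁ π₂ → A.theta π₁ = A.theta π₂

/-- Abstract feature structures. -/
def IsAFS {F T : Type*} (A : PreAFS F T) : Prop :=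
  IsPreAFS A ∧ PrefixClosed A ∧ FusionClosed A ∧
    EquivOnDom A ∧ FiniteIndex A ∧ RespectsRel A

/-- Bounded completeness: every up-bounded subset has a least upper bound. -/
def BddCompleteTypes (T : Type*) [PartialOrder T] : Prop :=
  ∀ S : Set T, (∃ u, ∀ t ∈ S, t ≤ u) → ∃ l, IsLUB S l

/-- The concretization `Conc(A)` of a pre-AFS `A`: all TFSs obtained by injecting
the `≈`-equivalence classes (represented via a choice function `g` constant exactly
on classes) into the nodes, with root the class of `ε`, types given by `Θ`, and
transitions `δ(q_[π], f) = q_[πf]` whenever `πf ∈ Π`. -/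
def Conc {F N T : Type*} (θ : N → T) (A : PreAFS F T) : Set (TFS F N) :=
  {B | ∃ g : List F → N,
    B.root = g [] ∧
    (B.Q : Set N) = g '' A.dom ∧
    (∀ π₁ ∈ A.dom, ∀ π₂ ∈ A.dom, (g π₁ = g π₂ ↔ A.rel π₁ π₂)) ∧
    (∀ π ∈ A.dom, A.theta π = some (θ (g π))) ∧
    ∀ π ∈ A.dom, ∀ f : F,
      (π ++ [f] ∈ A.dom → B.delta (g π) f = some (g (π ++ [f]))) ∧
      (π ++ [f] ∉ A.dom → B.delta (g π) f = none)}

/-! Every `X ∈ Conc(A)` has abstraction `A`: its paths are `Π`, a path has type `Θ π`, and two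
paths are reentrant in `X` exactly when they are `≈`-equivalent. Alphabetic variants are exactly
the TFSs with the same abstraction, since mutual morphisms must be inverse to each other on
nodes reached by a common path. Finally `Conc(A)` is never empty: the finitely many `≈`-classes
can be injected into `Nodes` respecting types, because every type has infinitely many nodes. -/

open Function

section

variable {F N T : Type*}

lemma PreAFS.ext {A B : PreAFS F T} (htheta : ∀ π, A.theta π = B.theta π)
    (hrel : ∀ π₁ π₂, A.rel π₁ π₂ ↔ B.rel π₁ π₂) : A = B := by
  cases A; cases B
  simp only [PreAFS.mk.injEq]
  exact ⟨funext htheta, funext₂ fun π₁ π₂ => propext (hrel π₁ π₂)⟩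

lemma PrefixClosed.nil_mem {A : PreAFS F T} (hPC : PrefixClosed A) (hne : A.dom.Nonempty) :
    [] ∈ A.dom := by
  obtain ⟨π, hπ⟩ := hne
  exact hPC [] π hπ

lemma FusionClosed.append_of_rel {A : PreAFS F T} (hFC : FusionClosed A) {π₁ π₂ α : List F}
    (hrel : A.rel π₁ π₂) (h₁ : π₁ ++ α ∈ A.dom) (h₂ : π₂ ∈ A.dom) :
    π₂ ++ α ∈ A.dom ∧ A.rel (π₂ ++ α) (π₁ ++ α) := by
  obtain ⟨-, hmem, -, hrel'⟩ := hFC π₁ π₂ α [] h₁ (by simpa using h₂) hrel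
  exact ⟨hmem, hrel'⟩

lemma deltaStar_append_singleton (d : N → F → Option N) (q : N) (π : List F) (f : F) :
    deltaStar d q (π ++ [f]) = (deltaStar d q π).bind (d · f) := by
  induction π generalizing q with
  | nil => simp [deltaStar]
  | cons f' π ih => simp [deltaStar, ih, Option.bind_assoc]

open Classical in
lemma deltaStar_eq_of_step {A : PreAFS F T} (hPC : PrefixClosed A) (hnil : [] ∈ A.dom)
    {g : List F → N} {d : N → F → Option N}
    (hd : ∀ π ∈ A.dom, ∀ f : F,
      (π ++ [f] ∈ A.dom → d (g π) f = some (g (π ++ [f]))) ∧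
      (π ++ [f] ∉ A.dom → d (g π) f = none))
    (π : List F) : deltaStar d (g []) π = if π ∈ A.dom then some (g π) else none := by
  induction π using List.reverseRecOn with
  | nil => simp [deltaStar, hnil]
  | append_singleton π f ih =>
    rw [deltaStar_append_singleton, ih]
    by_cases hπ : π ∈ A.dom
    · by_cases hπf : π ++ [f] ∈ A.dom
      · simp [hπ, hπf, (hd π hπ f).1 hπf]
      · simp [hπ, hπf, (hd π hπ f).2 hπf]
    · have hπf : π ++ [f] ∉ A.dom := fun h => hπ (hPC π [f] h)
      simp [hπ, hπf]

namespace TFS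

lemma val_nil (X : TFS F N) : X.val [] = some X.root := rfl

lemma val_append_singleton (X : TFS F N) (π : List F) (f : F) :
    X.val (π ++ [f]) = (X.val π).bind (X.delta · f) :=
  deltaStar_append_singleton _ _ _ _

lemma mem_Q_of_val_eq_some {X : TFS F N} {π : List F} {q : N} (h : X.val π = some q) :
    q ∈ X.Q := by
  induction π using List.reverseRecOn with
  | nil =>
    rw [val_nil, Option.some_inj] at h
    exact h ▸ X.root_mem
  | append_singleton π f _ =>
    rw [val_append_singleton, Option.bind_eq_some_iff] at h
    obtain ⟨q₀, -, hq⟩ := h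
    exact (X.delta_dom _ _ _ hq).2

lemma val_map_of_morphism {X Y : TFS F N} {h : N → N} (hroot : h X.root = Y.root)
    (hδ : ∀ q f q', X.delta q f = some q' → Y.delta (h q) f = some (h q'))
    {π : List F} {q : N} (hq : X.val π = some q) : Y.val π = some (h q) := by
  induction π using List.reverseRecOn generalizing q with
  | nil =>
    rw [val_nil, Option.some_inj] at hq
    rw [val_nil, ← hq, hroot]
  | append_singleton π f ih =>
    rw [val_append_singleton, Option.bind_eq_some_iff] at hq
    obtain ⟨q₀, hq₀, hstep⟩ := hq
    rw [val_append_singleton, ih hq₀, Option.bind_some, hδ _ _ _ hstep]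

lemma val_eq_map_of_morphisms {X Y : TFS F N} {h h' : N → N}
    (hroot : h X.root = Y.root)
    (hδ : ∀ q f q', X.delta q f = some q' → Y.delta (h q) f = some (h q'))
    (hroot' : h' Y.root = X.root)
    (hδ' : ∀ q f q', Y.delta q f = some q' → X.delta (h' q) f = some (h' q'))
    (π : List F) : Y.val π = (X.val π).map h := by
  cases hq : X.val π with
  | some q => exact val_map_of_morphism hroot hδ hq
  | none =>
    cases hq' : Y.val π with
    | none => rfl
    | some q' => simp [val_map_of_morphism hroot' hδ' hq'] at hq

def abstraction (θ : N → T) (X : TFS F N) : PreAFS F T where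
  theta π := (X.val π).map θ
  rel π₁ π₂ := (X.val π₁).isSome ∧ X.val π₁ = X.val π₂

lemma abstraction_of_mem_conc {θ : N → T} {A : PreAFS F T} (hA : IsPreAFS A)
    (hPC : PrefixClosed A) {X : TFS F N} (hX : X ∈ Conc θ A) : X.abstraction θ = A := by
  classical
  obtain ⟨g, hroot, -, hg, hθ, hδ⟩ := hX
  have hval (π : List F) : X.val π = if π ∈ A.dom then some (g π) else none := by
    rw [val, hroot]
    exact deltaStar_eq_of_step hPC (hPC.nil_mem hA.1) hδ π
  refine PreAFS.ext (fun π => ?_) (fun π₁ π₂ => ?_) <;> simp only [abstraction]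
  · by_cases hπ : π ∈ A.dom
    · simp [hval, hπ, hθ π hπ]
    · rw [hval, if_neg hπ, Option.map_none, eq_comm, ← Option.not_isSome_iff_eq_none]
      exact hπ
  · have hrel : A.rel π₁ π₂ ↔ π₁ ∈ A.dom ∧ π₂ ∈ A.dom ∧ g π₁ = g π₂ := by
      refine ⟨fun hr => ?_, fun ⟨h₁, h₂, he⟩ => (hg _ h₁ _ h₂).1 he⟩
      obtain ⟨h₁, h₂⟩ := hA.2 _ _ hr
      exact ⟨h₁, h₂, (hg _ h₁ _ h₂).2 hr⟩
    rw [hrel]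
    by_cases h₁ : π₁ ∈ A.dom <;> by_cases h₂ : π₂ ∈ A.dom <;> simp [hval, h₁, h₂]

variable [PartialOrder T] {θ : N → T}

lemma abstraction_eq_of_subsumes {X Y : TFS F N} (hXY : Subsumes θ X Y)
    (hYX : Subsumes θ Y X) : X.abstraction θ = Y.abstraction θ := by
  obtain ⟨h, -, hroot, hθ, hδ⟩ := hXY
  obtain ⟨h', -, hroot', hθ', hδ'⟩ := hYX
  have hY := val_eq_map_of_morphisms hroot hδ hroot' hδ'
  have hX := val_eq_map_of_morphisms hroot' hδ' hroot hδ
  have hθh {π : List F} {q : N} (hq : X.val π = some q) : θ (h q) = θ q := by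
    have hYq : Y.val π = some (h q) := by rw [hY, hq, Option.map_some]
    have hinv : h' (h q) = q := by simpa [hYq, hq] using (hX π).symm
    refine le_antisymm ?_ (hθ q (mem_Q_of_val_eq_some hq))
    calc θ (h q) ≤ θ (h' (h q)) := hθ' _ (mem_Q_of_val_eq_some hYq)
      _ = θ q := by rw [hinv]
  refine PreAFS.ext (fun π => ?_) (fun π₁ π₂ => ?_) <;> simp only [abstraction]
  · cases hq : X.val π with
    | none => simp [hY, hq]
    | some q => simp [hY, hq, hθh hq]
  · constructor
    · rintro ⟨hs, he⟩
      exact ⟨by simpa [hY] using hs, by rw [hY, hY, he]⟩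
    · rintro ⟨hs, he⟩
      exact ⟨by simpa [hX] using hs, by rw [hX, hX, he]⟩

/-- The morphism sends each node to the value in `Y` of some path reaching it in `X`; equal
abstractions make this independent of the path. -/
lemma subsumes_of_abstraction_eq {X Y : TFS F N}
    (habs : X.abstraction θ = Y.abstraction θ) : Subsumes θ X Y := by
  classical
  have htheta (π : List F) : (X.val π).map θ = (Y.val π).map θ :=
    congrFun (congrArg PreAFS.theta habs) π
  have hrel (π₁ π₂ : List F) : ((X.val π₁).isSome ∧ X.val π₁ = X.val π₂) →
      (Y.val π₁).isSome ∧ Y.val π₁ = Y.val π₂ :=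
    (congrFun₂ (congrArg PreAFS.rel habs) π₁ π₂).mp
  choose p hp using X.reach
  replace hp : ∀ q hq, X.val (p q hq) = some q := hp
  let h : N → N := fun q => if hq : q ∈ X.Q then (Y.val (p q hq)).getD Y.root else Y.root
  have hval {π : List F} {q : N} (hπ : X.val π = some q) : Y.val π = some (h q) := by
    have hq := mem_Q_of_val_eq_some hπ
    obtain ⟨hs, he⟩ := hrel (p q hq) π ⟨by simp [hp], (hp q hq).trans hπ.symm⟩
    obtain ⟨r, hr⟩ := Option.isSome_iff_exists.mp hs
    simp only [h, dif_pos hq, ← he, hr, Option.getD_some]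
  refine ⟨h, fun q hq => mem_Q_of_val_eq_some (hval (hp q hq)), ?_, fun q hq => ?_, ?_⟩
  · simpa [val_nil] using (hval X.val_nil).symm
  · have hθq := htheta (p q hq)
    rw [hp q hq, hval (hp q hq), Option.map_some, Option.map_some, Option.some_inj] at hθq
    exact hθq.le
  · intro q f q' hstep
    have hπ : X.val (p q _) = some q := hp q (X.delta_dom _ _ _ hstep).1
    have hπf := hval (π := p q _ ++ [f])
      (by rw [val_append_singleton, hπ, Option.bind_some, hstep])
    rwa [val_append_singleton, hval hπ, Option.bind_some] at hπf

end TFS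

namespace PreAFS

def classSetoid (A : PreAFS F T) (hEq : EquivOnDom A) : Setoid A.dom where
  r π₁ π₂ := A.rel π₁ π₂
  iseqv := ⟨fun π => hEq.1 π π.2, fun h => hEq.2.1 _ _ h, fun h₁ h₂ => hEq.2.2 _ _ _ h₁ h₂⟩

lemma finite_quotient_classSetoid (A : PreAFS F T) (hEq : EquivOnDom A) (hFI : FiniteIndex A) :
    Finite (Quotient (A.classSetoid hEq)) := by
  let cls : Quotient (A.classSetoid hEq) → Set (List F) :=
    Quotient.lift (fun π => {π' | A.rel π π'}) fun π₁ π₂ h12 => Set.ext fun π' =>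
      ⟨hEq.2.2 _ _ _ (hEq.2.1 _ _ h12), hEq.2.2 _ _ _ h12⟩
  have hcls_inj : Injective cls := by
    refine Quotient.ind₂ fun π₁ π₂ h12 => Quotient.sound ?_
    have hcls : {π' | A.rel π₁ π'} = {π' | A.rel π₂ π'} := h12
    have hself : π₂.1 ∈ {π' | A.rel π₂ π'} := hEq.1 π₂ π₂.2
    rw [← hcls] at hself
    exact hself
  have hrange : Set.range cls ⊆ {C | ∃ π ∈ A.dom, C = {π' | A.rel π π'}} :=
    Set.range_subset_iff.mpr fun c => Quotient.inductionOn c fun π => ⟨π.1, π.2, rfl⟩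
  have : Finite (Set.range cls) := (hFI.subset hrange).to_subtype
  exact Finite.of_injective_finite_range hcls_inj

end PreAFS

lemma exists_injective_comp_eq {ι : Type*} [Finite ι] {θ : N → T}
    (hrich : ∀ t : T, {q : N | θ q = t}.Infinite) (τ : ι → T) :
    ∃ e : ι → N, Injective e ∧ ∀ i, θ (e i) = τ i := by
  obtain ⟨n, ⟨enum⟩⟩ := Finite.exists_equiv_fin ι
  let E : T → ℕ → N := fun t k => (hrich t).natEmbedding _ k
  have hE (t : T) (k : ℕ) : θ (E t k) = t := ((hrich t).natEmbedding _ k).2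
  refine ⟨fun i => E (τ i) (enum i), fun i j hij => ?_, fun i => hE _ _⟩
  have hτ : τ i = τ j := by rw [← hE (τ i) (enum i), ← hE (τ j) (enum j)]; exact congrArg θ hij
  simp only [hτ] at hij
  exact enum.injective (Fin.ext (((hrich (τ j)).natEmbedding _).injective (Subtype.ext hij)))

/-- The transition on `f` out of the class of `π` is taken along any representative;
fusion-closedness makes this well defined. -/
lemma nonempty_conc_of_map {θ : N → T} {A : PreAFS F T} (hPC : PrefixClosed A)
    (hnil : [] ∈ A.dom) (hFC : FusionClosed A) (g : List F → N)
    (hg : ∀ π₁ ∈ A.dom, ∀ π₂ ∈ A.dom, g π₁ = g π₂ ↔ A.rel π₁ π₂)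
    (hθ : ∀ π ∈ A.dom, A.theta π = some (θ (g π))) (hfin : (g '' A.dom).Finite) :
    (Conc θ A).Nonempty := by
  classical
  let d : N → F → Option N := fun q f =>
    if h : ∃ π ∈ A.dom, g π = q ∧ π ++ [f] ∈ A.dom then some (g (h.choose ++ [f])) else none
  have hd : ∀ π ∈ A.dom, ∀ f : F,
      (π ++ [f] ∈ A.dom → d (g π) f = some (g (π ++ [f]))) ∧
      (π ++ [f] ∉ A.dom → d (g π) f = none) := by
    intro π hπ f
    constructor
    · intro hπf
      have hex : ∃ π' ∈ A.dom, g π' = g π ∧ π' ++ [f] ∈ A.dom := ⟨π, hπ, rfl, hπf⟩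
      obtain ⟨hmem, hgeq, hmemf⟩ := hex.choose_spec
      have hext := hFC.append_of_rel ((hg _ hmem _ hπ).1 hgeq) hmemf hπ
      simp only [d, dif_pos hex]
      exact congrArg some ((hg _ hπf _ hmemf).2 hext.2).symm
    · intro hπf
      simp only [d]
      refine dif_neg fun ⟨π', hπ', hgeq, hπ'f⟩ => hπf ?_
      exact (hFC.append_of_rel ((hg _ hπ' _ hπ).1 hgeq) hπ'f hπ).1
  refine ⟨⟨hfin.toFinset, g [], by simpa using ⟨[], hnil, rfl⟩, d, ?_, ?_⟩,
    g, rfl, by simp, hg, hθ, hd⟩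
  · intro q f q' hq
    simp only [d] at hq
    split_ifs at hq with hex
    obtain ⟨hmem, hgeq, hmemf⟩ := hex.choose_spec
    cases hq
    simpa using ⟨⟨_, hmem, hgeq⟩, ⟨_, hmemf, rfl⟩⟩
  · intro q hq
    obtain ⟨π, hπ, rfl⟩ := hfin.mem_toFinset.1 hq
    exact ⟨π, by simpa [hπ] using deltaStar_eq_of_step hPC hnil hd π⟩

lemma nonempty_conc {θ : N → T} (hrich : ∀ t : T, {q : N | θ q = t}.Infinite)
    {A : PreAFS F T} (hA : IsAFS A) : (Conc θ A).Nonempty := by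
  classical
  obtain ⟨⟨hne, -⟩, hPC, hFC, hEq, hFI, hRR⟩ := hA
  have hnil := hPC.nil_mem hne
  have := A.finite_quotient_classSetoid hEq hFI
  have hsome (π : A.dom) : (A.theta π).isSome := π.2
  let τ : Quotient (A.classSetoid hEq) → T :=
    Quotient.lift (fun π => (A.theta π).get (hsome π)) fun π₁ π₂ h12 =>
      Option.some_injective _ (by rw [Option.some_get, Option.some_get, hRR _ _ h12])
  obtain ⟨e, he, heθ⟩ := exists_injective_comp_eq hrich τ
  let g : List F → N := fun π =>
    if h : π ∈ A.dom then e (Quotient.mk _ ⟨π, h⟩) else e (Quotient.mk _ ⟨[], hnil⟩)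
  have hg (π : List F) (h : π ∈ A.dom) : g π = e (Quotient.mk _ ⟨π, h⟩) := dif_pos h
  refine nonempty_conc_of_map hPC hnil hFC g ?_ ?_ ?_
  · intro π₁ h₁ π₂ h₂
    rw [hg π₁ h₁, hg π₂ h₂, he.eq_iff, Quotient.eq]
    rfl
  · intro π h
    rw [hg π h, heθ]
    exact (Option.some_get h).symm
  · refine (Set.finite_range e).subset ?_
    rintro _ ⟨π, h, rfl⟩
    exact ⟨_, (hg π h).symm⟩

end

theorem conc_variants_iff_eq_general
    {F N T : Type*} [PartialOrder T]
    (θ : N → T)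
    (hrich : ∀ t : T, {q : N | θ q = t}.Infinite)
    (A B : PreAFS F T) (hA : IsAFS A) (hB : IsAFS B) :
    (∀ X ∈ Conc (N := N) θ A, ∀ Y ∈ Conc θ B, Subsumes θ X Y ∧ Subsumes θ Y X) ↔
      A = B := by
  constructor
  · intro hvariants
    obtain ⟨X, hX⟩ := nonempty_conc hrich hA
    obtain ⟨Y, hY⟩ := nonempty_conc hrich hB
    obtain ⟨hXY, hYX⟩ := hvariants X hX Y hY
    rw [← TFS.abstraction_of_mem_conc hA.1 hA.2.1 hX,
      ← TFS.abstraction_of_mem_conc hB.1 hB.2.1 hY]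
    exact TFS.abstraction_eq_of_subsumes hXY hYX
  · rintro rfl X hX Y hY
    have habs : X.abstraction θ = Y.abstraction θ :=
      (TFS.abstraction_of_mem_conc hA.1 hA.2.1 hX).trans
        (TFS.abstraction_of_mem_conc hA.1 hA.2.1 hY).symm
    exact ⟨TFS.subsumes_of_abstraction_eq habs, TFS.subsumes_of_abstraction_eq habs.symm⟩

/-- for AFSs `A` and `B`: every TFS in `Conc(A)` is an alphabetic
variant of every TFS in `Conc(B)` iff `A = B`. -/
theorem conc_variants_iff_eq
    {F N T : Type*} [Finite F] [Finite T] [PartialOrder T] [Infinite N]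
    (hbc : BddComplete T) (θ : N → T)
    (hrich : ∀ t : T, {q : N | θ q = t}.Infinite)
    (A B : PreAFS F T) (hA : IsAFS A) (hB : IsAFS B) :
    (∀ X ∈ Conc (N := N) θ A, ∀ Y ∈ Conc θ B, Subsumes θ X Y ∧ Subsumes θ Y X) ↔
      A = B :=
  conc_variants_iff_eq_general θ hrich A B hA hB
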